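/- Let ρ₀ ∈ (0, π/2] and let γ be a closed curve on S² with radius of curvature in (0, ρ₀) which is equatorial, i.e. the image of its caustic band C_γ is contained in some closed hemisphere {p ∈ S² : ⟨p, h⟩ ≥ 0} but is not contained in any open hemisphere {p ∈ S² : ⟨p, h'⟩ > 0}. Then there is exactly one unit vector h ∈ S² such that ⟨C_γ(t,θ), h⟩ ≥ 0 for all (t,θ) ∈ [0,1] × [0,ρ₀]. -/

import Mathlib

noncomputable section

open Real Set Filter
open scoped RealInnerProductSpace

abbrev E3 := EuclideanSpace ℝ (Fin 3)

/-- The cross product on `ℝ³`. -/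
def cross3 (u v : E3) : E3 :=
  (WithLp.equiv 2 (Fin 3 → ℝ)).symm
    ![u 1 * v 2 - u 2 * v 1, u 2 * v 0 - u 0 * v 2, u 0 * v 1 - u 1 * v 0]

/-- Unit tangent vector of a curve. -/
def unitTan (γ : ℝ → E3) (t : ℝ) : E3 := ‖deriv γ t‖⁻¹ • deriv γ t

/-- Unit normal vector of a spherical curve. -/
def unitNor (γ : ℝ → E3) (t : ℝ) : E3 := cross3 (γ t) (unitTan γ t)

/-- Geodesic curvature of a spherical curve. -/
def geodCurv (γ : ℝ → E3) (t : ℝ) : ℝ :=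
  ⟪deriv (unitTan γ) t, unitNor γ t⟫ / ‖deriv γ t‖

/-- Radius of curvature: `arccot` of the geodesic curvature, valued in `(0, π)`. -/
def radCurv (γ : ℝ → E3) (t : ℝ) : ℝ := π / 2 - arctan (geodCurv γ t)

/-- A closed curve on the sphere `S²`: a `C²`, 1-periodic, regular map into the unit sphere. -/
def IsClosedCurve (γ : ℝ → E3) : Prop :=
  ContDiff ℝ 2 γ ∧ Function.Periodic γ 1 ∧ ∀ t, ‖γ t‖ = 1 ∧ deriv γ t ≠ 0

/-- Homotopy of closed spherical curves through closed curves whose radius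
of curvature takes values in `(ρ₂, ρ₁)`. -/
def HomotopicIn (ρ₂ ρ₁ : ℝ) (γ₀ γ₁ : ℝ → E3) : Prop :=
  ∃ H : ℝ → ℝ → E3,
    H 0 = γ₀ ∧ H 1 = γ₁ ∧
    (∀ s ∈ Icc (0:ℝ) 1, IsClosedCurve (H s) ∧ ∀ t, radCurv (H s) t ∈ Ioo ρ₂ ρ₁) ∧
    ContinuousOn (fun p : ℝ × ℝ => H p.1 p.2) (Icc 0 1 ×ˢ univ) ∧
    ContinuousOn (fun p : ℝ × ℝ => deriv (H p.1) p.2) (Icc 0 1 ×ˢ univ) ∧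
    ContinuousOn (fun p : ℝ × ℝ => deriv (deriv (H p.1)) p.2) (Icc 0 1 ×ˢ univ)

/-- `σ` is a circle traversed `k` times with radius of curvature `α`. -/
def IsCircleTraversed (k : ℕ) (α : ℝ) (σ : ℝ → E3) : Prop :=
  α ∈ Ioo (0:ℝ) π ∧
  ∃ R : Matrix (Fin 3) (Fin 3) ℝ, R.transpose * R = 1 ∧ R.det = 1 ∧
    ∀ t, σ t = (WithLp.equiv 2 (Fin 3 → ℝ)).symm
      (R.mulVec ![sin α * cos (2 * π * k * t), sin α * sin (2 * π * k * t), cos α])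

/-- Caustic band / translation formula. -/
def caustic (γ : ℝ → E3) (t θ : ℝ) : E3 :=
  Real.cos θ • γ t + Real.sin θ • unitNor γ t

/-!
If two unit vectors `h₁, h₂` both support the caustic band and no point of the band lies on
both boundary circles, then `(h₁ + h₂)/‖h₁ + h₂‖` puts the band in an open hemisphere. So some
`C_γ(t, θ)` is orthogonal to both, and it remains to see that a supporting pole `h` touching the
band at `C_γ(t, θ)` is determined by `(t, θ)`. Write `h = a γ(t) + c t(t) + b n(t)`.
The function `θ ↦ ⟪C_γ(t, θ), h⟫ = a cos θ + b sin θ` is nonnegative on `[0, ρ₀]`, so it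
vanishes at an interior `θ` only if `a = b = 0`. Minimality in the curve parameter gives `c = 0`
whenever `cos θ - κ sin θ ≠ 0`, since `∂ₜ C_γ(t, θ) = (cos θ - κ sin θ) |γ'| t(t)`; this holds at
`θ = 0`, and at `θ = ρ₀` because `κ > cot ρ₀`. Hence interior contact is impossible, contact at
`θ = 0` forces `h = n(t)`, and contact at `θ = ρ₀` forces `h = sin ρ₀ γ(t) - cos ρ₀ n(t)`.
-/

section general

variable {F : Type*} [NormedAddCommGroup F] [InnerProductSpace ℝ F]

theorem HasDerivAt.inner_add_inner_eq_zero {f g : ℝ → F} {f' g' : F} {x c : ℝ}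
    (hf : HasDerivAt f f' x) (hg : HasDerivAt g g' x) (hc : ∀ s, ⟪f s, g s⟫ = c) :
    ⟪f x, g'⟫ + ⟪f', g x⟫ = 0 := by
  have hconst : HasDerivAt (fun s => ⟪f s, g s⟫) 0 x := by
    simpa only [hc] using hasDerivAt_const x c
  exact (hf.inner ℝ hg).unique hconst

theorem Orthonormal.sum_inner_smul_eq [FiniteDimensional ℝ F] {ι : Type*} [Fintype ι]
    {v : ι → F} (hv : Orthonormal ℝ v) (hcard : Fintype.card ι = Module.finrank ℝ F) (x : F) :
    ∑ i, ⟪v i, x⟫ • v i = x := by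
  simpa using (OrthonormalBasis.mk hv
    (hv.linearIndependent.span_eq_top_of_card_eq_finrank' hcard).ge).sum_repr' x

theorem Orthonormal.sum_sq_inner_eq [FiniteDimensional ℝ F] {ι : Type*} [Fintype ι]
    {v : ι → F} (hv : Orthonormal ℝ v) (hcard : Fintype.card ι = Module.finrank ℝ F) (x : F) :
    ∑ i, ⟪v i, x⟫ ^ 2 = ‖x‖ ^ 2 := by
  simpa using (OrthonormalBasis.mk hv
    (hv.linearIndependent.span_eq_top_of_card_eq_finrank' hcard).ge).sum_sq_inner_right x

theorem exists_inner_eq_zero_of_not_exists_inner_pos {ι : Type*} [Nonempty ι] {v : ι → F}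
    {h₁ h₂ : F} (hpos₁ : ∀ i, 0 ≤ ⟪v i, h₁⟫) (hpos₂ : ∀ i, 0 ≤ ⟪v i, h₂⟫)
    (hopen : ¬ ∃ h : F, ‖h‖ = 1 ∧ ∀ i, 0 < ⟪v i, h⟫) :
    ∃ i, ⟪v i, h₁⟫ = 0 ∧ ⟪v i, h₂⟫ = 0 := by
  by_contra! hzero
  have hsum : ∀ i, 0 < ⟪v i, h₁ + h₂⟫ := fun i => by
    rw [inner_add_right]
    rcases (hpos₁ i).eq_or_lt with h | h
    · exact add_pos_of_nonneg_of_pos (hpos₁ i) ((hpos₂ i).lt_of_ne (hzero i h.symm).symm)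
    · exact add_pos_of_pos_of_nonneg h (hpos₂ i)
  have hne : h₁ + h₂ ≠ 0 := by
    rintro heq
    simpa [heq] using hsum (Classical.arbitrary ι)
  refine hopen ⟨‖h₁ + h₂‖⁻¹ • (h₁ + h₂), norm_smul_inv_norm hne, fun i => ?_⟩
  rw [real_inner_smul_right]
  exact mul_pos (inv_pos.mpr (norm_pos_iff.mpr hne)) (hsum i)

end general

theorem eq_zero_of_isLocalMin_cos_mul_add_sin_mul {a b θ : ℝ}
    (hmin : IsLocalMin (fun φ => cos φ * a + sin φ * b) θ) (hzero : cos θ * a + sin θ * b = 0) :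
    a = 0 ∧ b = 0 := by
  have hderiv : -sin θ * a + cos θ * b = 0 :=
    hmin.hasDerivAt_eq_zero (((hasDerivAt_cos θ).mul_const a).add ((hasDerivAt_sin θ).mul_const b))
  have hpyth := sin_sq_add_cos_sq θ
  constructor
  · linear_combination cos θ * hzero - sin θ * hderiv - a * hpyth
  · linear_combination sin θ * hzero + cos θ * hderiv - b * hpyth

theorem cos_lt_sin_mul_of_pi_div_two_sub_arctan_lt {ρ κ : ℝ} (hρ : ρ ∈ Ioo 0 π)
    (hlt : π / 2 - arctan κ < ρ) : cos ρ < sin ρ * κ := by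
  have htan : tan (π / 2 - ρ) < κ := by
    simpa using tan_lt_tan_of_lt_of_lt_pi_div_two (by linarith [hρ.2]) (arctan_lt_pi_div_two κ)
      (show π / 2 - ρ < arctan κ by linarith)
  rw [tan_pi_div_two_sub, tan_eq_sin_div_cos, inv_div,
    div_lt_iff₀ (sin_pos_of_pos_of_lt_pi hρ.1 hρ.2)] at htan
  linarith

open Matrix WithLp in
theorem cross3_eq_crossProduct (u v : E3) : cross3 u v = toLp 2 (ofLp u ⨯₃ ofLp v) := rfl

theorem inner_self_cross3 (u v : E3) : ⟪u, cross3 u v⟫ = 0 := by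
  simp [cross3_eq_crossProduct, EuclideanSpace.inner_eq_star_dotProduct, dotProduct_comm _ u.ofLp]

theorem inner_cross3_self (u v : E3) : ⟪v, cross3 u v⟫ = 0 := by
  simp [cross3_eq_crossProduct, EuclideanSpace.inner_eq_star_dotProduct, dotProduct_comm _ v.ofLp]

theorem norm_cross3_of_orthonormal {u v : E3} (hu : ‖u‖ = 1) (hv : ‖v‖ = 1) (huv : ⟪u, v⟫ = 0) :
    ‖cross3 u v‖ = 1 := by
  rw [cross3_eq_crossProduct, InnerProductGeometry.norm_ofLp_crossProduct, hu, hv,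
    (InnerProductGeometry.inner_eq_zero_iff_angle_eq_pi_div_two u v).mp huv, sin_pi_div_two]
  norm_num

theorem DifferentiableAt.cross3 {f g : ℝ → E3} {x : ℝ} (hf : DifferentiableAt ℝ f x)
    (hg : DifferentiableAt ℝ g x) : DifferentiableAt ℝ (fun s => cross3 (f s) (g s)) x := by
  rw [differentiableAt_euclidean] at hf hg ⊢
  intro i
  fin_cases i <;> simp [_root_.cross3] <;> fun_prop

theorem inner_unitNor (γ : ℝ → E3) (t : ℝ) : ⟪γ t, unitNor γ t⟫ = 0 :=
  inner_self_cross3 _ _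

theorem inner_unitTan_unitNor (γ : ℝ → E3) (t : ℝ) : ⟪unitTan γ t, unitNor γ t⟫ = 0 :=
  inner_cross3_self _ _

namespace IsClosedCurve

variable {γ : ℝ → E3}

theorem hasDerivAt (hγ : IsClosedCurve γ) (t : ℝ) : HasDerivAt γ (deriv γ t) t :=
  (hγ.1.differentiable two_ne_zero t).hasDerivAt

theorem norm_deriv_ne_zero (hγ : IsClosedCurve γ) (t : ℝ) : ‖deriv γ t‖ ≠ 0 :=
  norm_ne_zero_iff.mpr (hγ.2.2 t).2

theorem deriv_eq_norm_smul_unitTan (hγ : IsClosedCurve γ) (t : ℝ) :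
    deriv γ t = ‖deriv γ t‖ • unitTan γ t := by
  rw [unitTan, smul_inv_smul₀ (hγ.norm_deriv_ne_zero t)]

theorem norm_unitTan (hγ : IsClosedCurve γ) (t : ℝ) : ‖unitTan γ t‖ = 1 :=
  norm_smul_inv_norm (hγ.2.2 t).2

theorem inner_unitTan (hγ : IsClosedCurve γ) (t : ℝ) : ⟪γ t, unitTan γ t⟫ = 0 := by
  have hconst : ∀ s, ⟪γ s, γ s⟫ = 1 := fun s => by
    rw [real_inner_self_eq_norm_sq, (hγ.2.2 s).1, one_pow]
  have h := (hγ.hasDerivAt t).inner_add_inner_eq_zero (hγ.hasDerivAt t) hconst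
  rw [real_inner_comm (γ t) (deriv γ t), ← two_mul, mul_eq_zero] at h
  rw [unitTan, real_inner_smul_right, h.resolve_left two_ne_zero, mul_zero]

theorem norm_unitNor (hγ : IsClosedCurve γ) (t : ℝ) : ‖unitNor γ t‖ = 1 :=
  norm_cross3_of_orthonormal (hγ.2.2 t).1 (hγ.norm_unitTan t) (hγ.inner_unitTan t)

theorem orthonormal_frame (hγ : IsClosedCurve γ) (t : ℝ) :
    Orthonormal ℝ ![γ t, unitTan γ t, unitNor γ t] := by
  simp [orthonormal_vecCons_iff, Fin.forall_fin_succ, (hγ.2.2 t).1, hγ.norm_unitTan t,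
    hγ.norm_unitNor t, hγ.inner_unitTan t, inner_unitNor, inner_unitTan_unitNor]

theorem eq_frame_sum (hγ : IsClosedCurve γ) (t : ℝ) (x : E3) :
    x = ⟪γ t, x⟫ • γ t + ⟪unitTan γ t, x⟫ • unitTan γ t + ⟪unitNor γ t, x⟫ • unitNor γ t := by
  simpa [Fin.sum_univ_three, add_assoc] using
    ((hγ.orthonormal_frame t).sum_inner_smul_eq (by simp) x).symm

theorem norm_sq_eq_frame_sum (hγ : IsClosedCurve γ) (t : ℝ) (x : E3) :
    ‖x‖ ^ 2 = ⟪γ t, x⟫ ^ 2 + ⟪unitTan γ t, x⟫ ^ 2 + ⟪unitNor γ t, x⟫ ^ 2 := by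
  simpa [Fin.sum_univ_three, add_assoc] using
    ((hγ.orthonormal_frame t).sum_sq_inner_eq (by simp) x).symm

theorem hasDerivAt_unitTan (hγ : IsClosedCurve γ) (t : ℝ) :
    HasDerivAt (unitTan γ) (deriv (unitTan γ) t) t := by
  have hd : DifferentiableAt ℝ (deriv γ) t := hγ.1.differentiable_deriv_two t
  exact (((hd.norm ℝ (hγ.2.2 t).2).inv (hγ.norm_deriv_ne_zero t)).smul hd).hasDerivAt

theorem hasDerivAt_unitNor (hγ : IsClosedCurve γ) (t : ℝ) :
    HasDerivAt (unitNor γ) (deriv (unitNor γ) t) t :=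
  ((hγ.hasDerivAt t).differentiableAt.cross3 (hγ.hasDerivAt_unitTan t).differentiableAt).hasDerivAt

theorem deriv_unitNor (hγ : IsClosedCurve γ) (t : ℝ) :
    deriv (unitNor γ) t = -(geodCurv γ t * ‖deriv γ t‖) • unitTan γ t := by
  have hn := hγ.hasDerivAt_unitNor t
  have hnn : ⟪unitNor γ t, deriv (unitNor γ) t⟫ = 0 := by
    have h := hn.inner_add_inner_eq_zero hn fun s => by
      rw [real_inner_self_eq_norm_sq, hγ.norm_unitNor s, one_pow]
    linarith [real_inner_comm (unitNor γ t) (deriv (unitNor γ) t)]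
  have hγn : ⟪γ t, deriv (unitNor γ) t⟫ = 0 := by
    have h := (hγ.hasDerivAt t).inner_add_inner_eq_zero hn (inner_unitNor γ)
    rwa [hγ.deriv_eq_norm_smul_unitTan, real_inner_smul_left, inner_unitTan_unitNor, mul_zero,
      add_zero] at h
  have hTn : ⟪unitTan γ t, deriv (unitNor γ) t⟫ = -(geodCurv γ t * ‖deriv γ t‖) := by
    have h := (hγ.hasDerivAt_unitTan t).inner_add_inner_eq_zero hn (inner_unitTan_unitNor γ)
    rw [geodCurv, div_mul_cancel₀ _ (hγ.norm_deriv_ne_zero t)]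
    linarith
  rw [hγ.eq_frame_sum t (deriv (unitNor γ) t), hγn, hTn, hnn]
  simp

end IsClosedCurve

theorem inner_caustic (γ : ℝ → E3) (t θ : ℝ) (h : E3) :
    ⟪caustic γ t θ, h⟫ = cos θ * ⟪γ t, h⟫ + sin θ * ⟪unitNor γ t, h⟫ := by
  rw [caustic, inner_add_left, real_inner_smul_left, real_inner_smul_left]

theorem IsClosedCurve.hasDerivAt_inner_caustic {γ : ℝ → E3} (hγ : IsClosedCurve γ)
    (t θ : ℝ) (h : E3) :
    HasDerivAt (fun s => ⟪caustic γ s θ, h⟫)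
      ((cos θ - sin θ * geodCurv γ t) * ‖deriv γ t‖ * ⟪unitTan γ t, h⟫) t := by
  have hinner : ⟪deriv γ t, h⟫ = ‖deriv γ t‖ * ⟪unitTan γ t, h⟫ := by
    conv_lhs => rw [hγ.deriv_eq_norm_smul_unitTan]
    exact real_inner_smul_left _ _ _
  rw [funext fun s => inner_caustic γ s θ h]
  refine ((((hγ.hasDerivAt t).inner ℝ (hasDerivAt_const t h)).const_mul (cos θ)).add
    (((hγ.hasDerivAt_unitNor t).inner ℝ (hasDerivAt_const t h)).const_mul (sin θ))).congr_deriv ?_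
  rw [inner_zero_right, inner_zero_right, zero_add, zero_add, hinner, hγ.deriv_unitNor,
    real_inner_smul_left]
  ring

def CausticBandInHemisphere (γ : ℝ → E3) (ρ₀ : ℝ) (h : E3) : Prop :=
  ∀ t, ∀ θ ∈ Icc (0:ℝ) ρ₀, 0 ≤ ⟪caustic γ t θ, h⟫

section touch

variable {γ : ℝ → E3} {ρ₀ : ℝ} {h : E3} {t θ : ℝ}

theorem IsClosedCurve.inner_unitTan_eq_zero_of_touch (hγ : IsClosedCurve γ)
    (hband : CausticBandInHemisphere γ ρ₀ h) (hθ : θ ∈ Icc 0 ρ₀)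
    (hz : ⟪caustic γ t θ, h⟫ = 0) (hreg : cos θ - sin θ * geodCurv γ t ≠ 0) :
    ⟪unitTan γ t, h⟫ = 0 := by
  have hmin : IsLocalMin (fun s => ⟪caustic γ s θ, h⟫) t :=
    Eventually.of_forall fun s => hz.le.trans (hband s θ hθ)
  have h0 := hmin.hasDerivAt_eq_zero (hγ.hasDerivAt_inner_caustic t θ h)
  exact (mul_eq_zero.mp h0).resolve_left (mul_ne_zero hreg (hγ.norm_deriv_ne_zero t))

theorem IsClosedCurve.eq_unitNor_of_touch_left (hγ : IsClosedCurve γ) (hρ₀ : ρ₀ ∈ Ioo 0 π)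
    (hh : ‖h‖ = 1) (hband : CausticBandInHemisphere γ ρ₀ h) (hz : ⟪caustic γ t 0, h⟫ = 0) :
    h = unitNor γ t := by
  have ha : ⟪γ t, h⟫ = 0 := by simpa [inner_caustic] using hz
  have hc := hγ.inner_unitTan_eq_zero_of_touch hband ⟨le_rfl, hρ₀.1.le⟩ hz (by simp)
  have hb : 0 ≤ ⟪unitNor γ t, h⟫ := by
    have := hband t ρ₀ ⟨hρ₀.1.le, le_rfl⟩
    rw [inner_caustic, ha, mul_zero, zero_add] at this
    exact nonneg_of_mul_nonneg_right this (sin_pos_of_pos_of_lt_pi hρ₀.1 hρ₀.2)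
  have hnorm := hγ.norm_sq_eq_frame_sum t h
  rw [hh, ha, hc] at hnorm
  have hb1 : ⟪unitNor γ t, h⟫ = 1 := by nlinarith
  rw [hγ.eq_frame_sum t h, ha, hc, hb1]
  simp

theorem IsClosedCurve.eq_sin_smul_sub_cos_smul_of_touch_right (hγ : IsClosedCurve γ)
    (hρ₀ : ρ₀ ∈ Ioo 0 π) (hrad : radCurv γ t < ρ₀) (hh : ‖h‖ = 1)
    (hband : CausticBandInHemisphere γ ρ₀ h) (hz : ⟪caustic γ t ρ₀, h⟫ = 0) :
    h = sin ρ₀ • γ t - cos ρ₀ • unitNor γ t := by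
  have hs : 0 < sin ρ₀ := sin_pos_of_pos_of_lt_pi hρ₀.1 hρ₀.2
  have hc := hγ.inner_unitTan_eq_zero_of_touch hband ⟨hρ₀.1.le, le_rfl⟩ hz
    (sub_ne_zero.mpr (cos_lt_sin_mul_of_pi_div_two_sub_arctan_lt hρ₀ hrad).ne)
  have ha : 0 ≤ ⟪γ t, h⟫ := by simpa [inner_caustic] using hband t 0 ⟨le_rfl, hρ₀.1.le⟩
  have hz' : cos ρ₀ * ⟪γ t, h⟫ + sin ρ₀ * ⟪unitNor γ t, h⟫ = 0 := by rwa [← inner_caustic]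
  have hnorm := hγ.norm_sq_eq_frame_sum t h
  rw [hh, hc] at hnorm
  have hpyth := sin_sq_add_cos_sq ρ₀
  have ha' : ⟪γ t, h⟫ = sin ρ₀ := by
    refine (sq_eq_sq₀ ha hs.le).mp ?_
    linear_combination (cos ρ₀ * ⟪γ t, h⟫ - sin ρ₀ * ⟪unitNor γ t, h⟫) * hz'
      - ⟪γ t, h⟫ ^ 2 * hpyth - sin ρ₀ ^ 2 * hnorm
  have hb : ⟪unitNor γ t, h⟫ = -cos ρ₀ := by
    refine mul_left_cancel₀ hs.ne' ?_
    linear_combination hz' - cos ρ₀ * ha'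
  rw [hγ.eq_frame_sum t h, ha', hc, hb]
  module

theorem IsClosedCurve.not_touch_of_mem_Ioo (hγ : IsClosedCurve γ) (hh : ‖h‖ = 1)
    (hband : CausticBandInHemisphere γ ρ₀ h) (hθ : θ ∈ Ioo 0 ρ₀) :
    ⟪caustic γ t θ, h⟫ ≠ 0 := by
  intro hz
  have hmin : IsLocalMin (fun φ => cos φ * ⟪γ t, h⟫ + sin φ * ⟪unitNor γ t, h⟫) θ := by
    filter_upwards [Ioo_mem_nhds hθ.1 hθ.2] with φ hφ
    simpa only [← inner_caustic, hz] using hband t φ (Ioo_subset_Icc_self hφ)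
  obtain ⟨ha, hb⟩ := eq_zero_of_isLocalMin_cos_mul_add_sin_mul hmin (by rwa [← inner_caustic])
  have hz0 : ⟪caustic γ t 0, h⟫ = 0 := by simp [inner_caustic, ha]
  have hc := hγ.inner_unitTan_eq_zero_of_touch hband ⟨le_rfl, hθ.1.le.trans hθ.2.le⟩ hz0 (by simp)
  have hnorm := hγ.norm_sq_eq_frame_sum t h
  rw [hh, ha, hb, hc] at hnorm
  norm_num at hnorm

end touch

theorem IsClosedCurve.eq_of_touch {γ : ℝ → E3} {ρ₀ t θ : ℝ} {h₁ h₂ : E3}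
    (hγ : IsClosedCurve γ) (hρ₀ : ρ₀ ∈ Ioo 0 π) (hrad : radCurv γ t < ρ₀)
    (hh₁ : ‖h₁‖ = 1) (hh₂ : ‖h₂‖ = 1) (hband₁ : CausticBandInHemisphere γ ρ₀ h₁)
    (hband₂ : CausticBandInHemisphere γ ρ₀ h₂) (hθ : θ ∈ Icc 0 ρ₀)
    (hz₁ : ⟪caustic γ t θ, h₁⟫ = 0) (hz₂ : ⟪caustic γ t θ, h₂⟫ = 0) : h₁ = h₂ := by
  rcases hθ.1.eq_or_lt with rfl | hθ₀
  · rw [hγ.eq_unitNor_of_touch_left hρ₀ hh₁ hband₁ hz₁,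
      hγ.eq_unitNor_of_touch_left hρ₀ hh₂ hband₂ hz₂]
  rcases hθ.2.eq_or_lt with rfl | hθρ
  · rw [hγ.eq_sin_smul_sub_cos_smul_of_touch_right hρ₀ hrad hh₁ hband₁ hz₁,
      hγ.eq_sin_smul_sub_cos_smul_of_touch_right hρ₀ hrad hh₂ hband₂ hz₂]
  · exact absurd hz₁ (hγ.not_touch_of_mem_Ioo hh₁ hband₁ ⟨hθ₀, hθρ⟩)

/-- For an equatorial curve (caustic band contained in some closed
hemisphere, but in no open hemisphere), the closed hemisphere containing the caustic band
is unique. -/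
theorem equatorial_hemisphere_unique (ρ₀ : ℝ) (hρ₀ : ρ₀ ∈ Ioc 0 (π / 2))
    (γ : ℝ → E3) (hγ : IsClosedCurve γ) (hrad : ∀ t, radCurv γ t ∈ Ioo 0 ρ₀)
    (hcond : ∃ h : E3, ‖h‖ = 1 ∧ ∀ t, ∀ θ ∈ Icc (0:ℝ) ρ₀, 0 ≤ ⟪caustic γ t θ, h⟫)
    (hnotopen : ¬ ∃ h : E3, ‖h‖ = 1 ∧ ∀ t, ∀ θ ∈ Icc (0:ℝ) ρ₀, 0 < ⟪caustic γ t θ, h⟫) :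
    ∃! h : E3, ‖h‖ = 1 ∧ ∀ t, ∀ θ ∈ Icc (0:ℝ) ρ₀, 0 ≤ ⟪caustic γ t θ, h⟫ := by
  obtain ⟨h₀, hh₀, hband₀⟩ := hcond
  refine ⟨h₀, ⟨hh₀, hband₀⟩, fun h ⟨hh, hband⟩ => ?_⟩
  have : Nonempty (Icc 0 ρ₀) := ⟨⟨0, le_rfl, hρ₀.1.le⟩⟩
  obtain ⟨⟨t, θ, hθ⟩, hz, hz₀⟩ := exists_inner_eq_zero_of_not_exists_inner_pos
    (v := fun p : ℝ × Icc 0 ρ₀ => caustic γ p.1 p.2)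
    (fun p => hband p.1 p.2 p.2.2) (fun p => hband₀ p.1 p.2 p.2.2)
    fun ⟨h', hh', hpos⟩ => hnotopen ⟨h', hh', fun t θ hθ => hpos (t, ⟨θ, hθ⟩)⟩
  have hρ₀π : ρ₀ ∈ Ioo 0 π := ⟨hρ₀.1, hρ₀.2.trans_lt (half_lt_self pi_pos)⟩
  exact hγ.eq_of_touch hρ₀π (hrad t).2 hh hh₀ hband hband₀ hθ hz hz₀
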